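/- arXiv:2202.00536 — 2 statements merged into one kernel-verified Lean document; each statement's English description precedes it below -/
import Mathlib

section
/- Let H be a normal subgroup of finite index in a group G, let T be a generating set of H, let R be a right transversal of H in G (every element of G is uniquely h·r with h ∈ H, r ∈ R), let q : G → H be the map with q(hr) = h, and let S = T ∪ R. Then for all a,b ∈ G, d_S(a,b) ≤ d_T(q(a),q(b)) + 2, where d_S is the word metric on G associated to S and d_T is the word metric on H associated to T. -/
/-- Word metric on a group `G` associated to a (generating) set `S`:
`wordDist S a b` is the least `n` such that `a⁻¹ * b` is a product of `n`
elements of `S ∪ S⁻¹`. -/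
noncomputable def wordDist {G : Type*} [Group G] (S : Set G) (a b : G) : ℕ :=
  sInf {n : ℕ | ∃ l : List G, (∀ x ∈ l, x ∈ S ∨ x⁻¹ ∈ S) ∧ l.length = n ∧ l.prod = a⁻¹ * b}

/-- `q` is an `(L,C)`-quasi-isometric embedding with respect to the
distance functions `dX` and `dY`. -/
def IsQIEmb {X Y : Type*} (L C : ℝ) (dX : X → X → ℝ) (dY : Y → Y → ℝ) (q : X → Y) : Prop :=
  ∀ a b, dX a b / L - C ≤ dY (q a) (q b) ∧ dY (q a) (q b) ≤ L * dX a b + C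

/-- `q` is an `(L,C)`-quasi-isometry: an `(L,C)`-quasi-isometric embedding whose image is
`C`-dense. -/
def IsQI {X Y : Type*} (L C : ℝ) (dX : X → X → ℝ) (dY : Y → Y → ℝ) (q : X → Y) : Prop :=
  IsQIEmb L C dX dY q ∧ ∀ y, ∃ x, dY y (q x) ≤ C

/-!
Write `a = q(a) r` and `b = q(b) r'` with `r, r' ∈ R`. Then `a⁻¹ b = r⁻¹ (q(a)⁻¹ q(b)) r'`, and a
shortest `T`-word for `q(a)⁻¹ q(b)` becomes an `S`-word in `G` once the two letters `r⁻¹` and `r'`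
are added at its ends.
-/

section WordDist

variable {G : Type*} [Group G]

theorem wordDist_le_of_list {S : Set G} {a b : G} {l : List G}
    (hl : ∀ x ∈ l, x ∈ S ∨ x⁻¹ ∈ S) (hprod : l.prod = a⁻¹ * b) :
    wordDist S a b ≤ l.length :=
  Nat.sInf_le ⟨l, hl, rfl, hprod⟩

theorem exists_list_length_eq_wordDist {S : Set G} {a b : G}
    (hab : a⁻¹ * b ∈ Subgroup.closure S) :
    ∃ l : List G, (∀ x ∈ l, x ∈ S ∨ x⁻¹ ∈ S) ∧ l.length = wordDist S a b ∧
      l.prod = a⁻¹ * b := by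
  have hab' : a⁻¹ * b ∈ Submonoid.closure (S ∪ S⁻¹) := by
    rw [← Subgroup.closure_toSubmonoid]; exact hab
  obtain ⟨l, hl, hprod⟩ := Submonoid.exists_list_of_mem_closure hab'
  exact Nat.sInf_mem (s := {n | ∃ l : List G, (∀ x ∈ l, x ∈ S ∨ x⁻¹ ∈ S) ∧ l.length = n ∧
    l.prod = a⁻¹ * b}) ⟨l.length, l, hl, rfl, hprod⟩

theorem wordDist_mul_mul_le {S : Set G} {g g' r r' : G}
    (hgg' : g⁻¹ * g' ∈ Subgroup.closure S) (hr : r ∈ S) (hr' : r' ∈ S) :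
    wordDist S (g * r) (g' * r') ≤ wordDist S g g' + 2 := by
  obtain ⟨l, hl, hlen, hprod⟩ := exists_list_length_eq_wordDist hgg'
  have hletters : ∀ x ∈ r⁻¹ :: (l ++ [r']), x ∈ S ∨ x⁻¹ ∈ S := by
    simp only [List.mem_cons, List.mem_append, List.not_mem_nil, or_false]
    rintro x (rfl | hx | rfl)
    · exact Or.inr (by rwa [inv_inv])
    · exact hl x hx
    · exact Or.inl hr'
  calc wordDist S (g * r) (g' * r')
      ≤ (r⁻¹ :: (l ++ [r'])).length :=
        wordDist_le_of_list hletters (by simp [hprod, mul_assoc])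
    _ = wordDist S g g' + 2 := by simp [hlen]

theorem wordDist_coe_le {H : Subgroup G} {S : Set G} {T : Set H}
    (hTS : Subtype.val '' T ⊆ S) {h h' : H} (hhh' : h⁻¹ * h' ∈ Subgroup.closure T) :
    wordDist S (h : G) h' ≤ wordDist T h h' := by
  obtain ⟨l, hl, hlen, hprod⟩ := exists_list_length_eq_wordDist hhh'
  have hletters : ∀ x ∈ l.map Subtype.val, x ∈ S ∨ x⁻¹ ∈ S := by
    simp only [List.mem_map]
    rintro _ ⟨t, ht, rfl⟩
    exact (hl t ht).imp (fun h ↦ hTS ⟨t, h, rfl⟩) (fun h ↦ hTS ⟨t⁻¹, h, rfl⟩)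
  calc wordDist S (h : G) h'
      ≤ (l.map Subtype.val).length :=
        wordDist_le_of_list hletters (by rw [← H.coe_subtype, ← map_list_prod, hprod]; simp)
    _ = wordDist T h h' := by rw [List.length_map, hlen]

theorem Subgroup.closure_image_subtype_val {H : Subgroup G} {T : Set H}
    (hT : Subgroup.closure T = ⊤) : Subgroup.closure (Subtype.val '' T) = H := by
  rw [← H.coe_subtype, ← MonoidHom.map_closure, hT, ← MonoidHom.range_eq_map, range_subtype]

end WordDist

theorem stmt6_general {G : Type*} [Group G]
    (H : Subgroup G)
    (T : Set H) (hTgen : Subgroup.closure T = ⊤)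
    (R : Set G)
    (hR : ∀ g : G, ∃! p : H × R, (p.1 : G) * (p.2 : G) = g)
    (q : G → H)
    (hq : ∀ (h : H) (r : R), q ((h : G) * (r : G)) = h) :
    ∀ a b : G, wordDist ((Subtype.val '' T) ∪ R) a b ≤ wordDist T (q a) (q b) + 2 := by
  intro a b
  obtain ⟨⟨h, r⟩, rfl, -⟩ := hR a
  obtain ⟨⟨h', r'⟩, rfl, -⟩ := hR b
  rw [hq, hq]
  have hclosure : (h : G)⁻¹ * h' ∈ Subgroup.closure (Subtype.val '' T ∪ R) :=
    Subgroup.closure_mono Set.subset_union_left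
      (by rw [Subgroup.closure_image_subtype_val hTgen]; exact H.mul_mem (H.inv_mem h.2) h'.2)
  calc wordDist (Subtype.val '' T ∪ R) (h * r) (h' * r')
      ≤ wordDist (Subtype.val '' T ∪ R) h h' + 2 :=
        wordDist_mul_mul_le hclosure (Or.inr r.2) (Or.inr r'.2)
    _ ≤ wordDist T h h' + 2 := by
        gcongr
        exact wordDist_coe_le Set.subset_union_left (by rw [hTgen]; trivial)

theorem stmt6 {G : Type*} [Group G]
    (H : Subgroup G) [H.Normal] [H.FiniteIndex]
    (T : Set H) (hTgen : Subgroup.closure T = ⊤)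
    (R : Set G)
    (hR : ∀ g : G, ∃! p : H × R, (p.1 : G) * (p.2 : G) = g)
    (q : G → H)
    (hq : ∀ (h : H) (r : R), q ((h : G) * (r : G)) = h) :
    ∀ a b : G, wordDist ((Subtype.val '' T) ∪ R) a b ≤ wordDist T (q a) (q b) + 2 :=
  stmt6_general H T hTgen R hR q hq
end

section
/- Let G be a finitely generated group with a word metric d coming from a finite generating set, let H be a finite-index subgroup of G, and let 𝒬 be a finite collection of subgroups of H. Then the following are equivalent: (1) there exists M ≥ 0 such that for every g ∈ G and every Q ∈ 𝒬 there exist h ∈ H and Q' ∈ 𝒬 with Hdist(gQ, hQ') ≤ M; (2) for every g ∈ G and every Q ∈ 𝒬 there exist h ∈ H and Q' ∈ 𝒬 with Hdist(gQ, hQ') < ∞. -/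
open scoped Pointwise ENNReal

/-- Hausdorff distance (valued in `ℝ≥0∞`) between subsets of a group, with respect to the
word metric associated to `S`. -/
noncomputable def hdist {G : Type*} [Group G] (S : Set G) (A B : Set G) : ℝ≥0∞ :=
  max (⨆ a ∈ A, ⨅ b ∈ B, (wordDist S a b : ℝ≥0∞)) (⨆ b ∈ B, ⨅ a ∈ A, (wordDist S a b : ℝ≥0∞))

lemma wordDist_mul_left {G : Type*} [Group G] (S : Set G) (k a b : G) :
    wordDist S (k * a) (k * b) = wordDist S a b := by
  simp only [wordDist, mul_inv_rev, mul_assoc, inv_mul_cancel_left]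

lemma hdist_smul {G : Type*} [Group G] (S : Set G) (k : G) (A B : Set G) :
    hdist S (k • A) (k • B) = hdist S A B := by
  simp only [hdist, ← Set.image_smul, iSup_image, iInf_image, smul_eq_mul, wordDist_mul_left]

lemma hdist_mul_smul_mul_smul {G : Type*} [Group G] (S : Set G) (k a b : G) (A B : Set G) :
    hdist S ((k * a) • A) ((k * b) • B) = hdist S (a • A) (b • B) := by
  rw [mul_smul, mul_smul, hdist_smul]

lemma Set.Finite.exists_ne_top_forall_of_monotone {ι : Type*} {s : Set ι} (hs : s.Finite)
    {P : ι → ℝ≥0∞ → Prop} (hP : ∀ i, Monotone (P i)) (h : ∀ i ∈ s, ∃ m ≠ ⊤, P i m) :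
    ∃ M ≠ ⊤, ∀ i ∈ s, P i M := by
  choose! m hm_ne_top hPm using h
  refine ⟨hs.toFinset.sup m, ?_, fun i hi => hP i ?_ (hPm i hi)⟩
  · rw [← lt_top_iff_ne_top, Finset.sup_lt_iff bot_lt_top]
    exact fun i hi => (hm_ne_top i (hs.mem_toFinset.mp hi)).lt_top
  · exact Finset.le_sup (hs.mem_toFinset.mpr hi)

theorem stmt7_general {G : Type*} [Group G]
    (S : Set G)
    (H : Subgroup G) [H.FiniteIndex]
    (𝒬 : Set (Subgroup G)) (h𝒬fin : 𝒬.Finite) :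
    (∃ M : ℝ≥0∞, M ≠ ⊤ ∧ ∀ g : G, ∀ Q ∈ 𝒬, ∃ h ∈ H, ∃ Q' ∈ 𝒬,
        hdist S (g • (Q : Set G)) (h • (Q' : Set G)) ≤ M)
    ↔
    (∀ g : G, ∀ Q ∈ 𝒬, ∃ h ∈ H, ∃ Q' ∈ 𝒬,
        hdist S (g • (Q : Set G)) (h • (Q' : Set G)) < ⊤) := by
  refine ⟨fun ⟨M, hM, hbound⟩ g Q hQ => ?_, fun hfinite => ?_⟩
  · obtain ⟨h, hh, Q', hQ', hle⟩ := hbound g Q hQ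
    exact ⟨h, hh, Q', hQ', hle.trans_lt hM.lt_top⟩
  obtain ⟨T, hT, -⟩ := H.exists_isComplement_right 1
  have : Finite T := hT.finite_right_iff.mpr ‹_›
  obtain ⟨M, hM, hbound⟩ := (T.toFinite.prod h𝒬fin).exists_ne_top_forall_of_monotone
    (P := fun i M => ∃ h ∈ H, ∃ Q' ∈ 𝒬, hdist S (i.1 • (i.2 : Set G)) (h • (Q' : Set G)) ≤ M)
    (fun _ _ _ hMM' ⟨h, hh, Q', hQ', hle⟩ => ⟨h, hh, Q', hQ', hle.trans hMM'⟩)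
    (fun i hi => by
      obtain ⟨h, hh, Q', hQ', hlt⟩ := hfinite i.1 i.2 hi.2
      exact ⟨_, hlt.ne, h, hh, Q', hQ', le_rfl⟩)
  refine ⟨M, hM, fun g Q hQ => ?_⟩
  obtain ⟨⟨⟨k, hk⟩, ⟨t, ht⟩⟩, rfl, -⟩ := hT.existsUnique g
  obtain ⟨h, hh, Q', hQ', hle⟩ := hbound (t, Q) ⟨ht, hQ⟩
  exact ⟨k * h, H.mul_mem hk hh, Q', hQ', by rwa [hdist_mul_smul_mul_smul]⟩

theorem stmt7 {G : Type*} [Group G]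
    (S : Set G) (hSfin : S.Finite) (hSgen : Subgroup.closure S = ⊤)
    (H : Subgroup G) [H.FiniteIndex]
    (𝒬 : Set (Subgroup G)) (h𝒬fin : 𝒬.Finite) (h𝒬H : ∀ Q ∈ 𝒬, Q ≤ H) :
    (∃ M : ℝ≥0∞, M ≠ ⊤ ∧ ∀ g : G, ∀ Q ∈ 𝒬, ∃ h ∈ H, ∃ Q' ∈ 𝒬,
        hdist S (g • (Q : Set G)) (h • (Q' : Set G)) ≤ M)
    ↔
    (∀ g : G, ∀ Q ∈ 𝒬, ∃ h ∈ H, ∃ Q' ∈ 𝒬,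
        hdist S (g • (Q : Set G)) (h • (Q' : Set G)) < ⊤) :=
  stmt7_general S H 𝒬 h𝒬fin
end
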